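/- Let h : ℝ^d → [0,1] be measurable and ĥ(x) = E_{Z ∼ N(0, σ²I_d)}[h(x + Z)] for σ > 0. Then for all x, δ ∈ ℝ^d, |ĥ(x + δ) − ĥ(x)| ≤ (‖δ‖₂/σ) · sup_{s∈[0,1]} φ(Φ⁻¹(s)) = ‖δ‖₂/(σ√(2π)); in particular ĥ is (1/(σ√(2π)))-Lipschitz. -/

import Mathlib

/-!
Write `p` for the density of `N(0, σ²I_d)` and `φ_m` for that of `N(m, σ²)`. Since
`ĥ(x + δ) - ĥ(x) = ∫ h(x + w) (p(w - δ) - p(w)) dw` and `0 ≤ h ≤ 1`, the increment is at most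
`∫ (p(w - δ) - p(w))⁺ dw`. A reflection taking `δ` to `‖δ‖ eᵢ` preserves `p`, after which the two
densities differ only in the `i`-th coordinate, so this integral equals `∫ (φ_r - φ_0)⁺` with
`r = ‖δ‖`. The positive part is supported on `[r/2, ∞)`, and translating shows that it is the mass
of `N(0, σ²)` on `[-r/2, r/2]`, at most `r · φ_0(0) = r / (σ√(2π))`.
-/

open MeasureTheory

/-- Density of `N(0, σ²I_d)` on `ℝ^d`. -/
noncomputable def gpdfs (d : ℕ) (σ : ℝ) (w : EuclideanSpace ℝ (Fin d)) : ℝ :=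
  (2 * Real.pi * σ ^ 2) ^ (-(d : ℝ) / 2) * Real.exp (-‖w‖ ^ 2 / (2 * σ ^ 2))

/-- Gaussian smoothing `ĥ(x) = E_{Z ∼ N(0, σ²I_d)}[h(x + Z)]`. -/
noncomputable def gsmooth (d : ℕ) (σ : ℝ) (h : EuclideanSpace ℝ (Fin d) → ℝ)
    (x : EuclideanSpace ℝ (Fin d)) : ℝ :=
  ∫ z, h (x + z) * gpdfs d σ z

open ProbabilityTheory Real Set
open scoped NNReal

def gaussVar (σ : ℝ) : ℝ≥0 := ⟨σ ^ 2, sq_nonneg σ⟩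

@[simp] lemma coe_gaussVar (σ : ℝ) : (gaussVar σ : ℝ) = σ ^ 2 := rfl

lemma gaussVar_ne_zero {σ : ℝ} (hσ : σ ≠ 0) : gaussVar σ ≠ 0 := by
  rw [← NNReal.coe_ne_zero, coe_gaussVar]
  positivity

section OneDimensional

variable {v : ℝ≥0}

lemma gaussianPDFReal_le_of_sq_le {a b t : ℝ} (h : (t - a) ^ 2 ≤ (t - b) ^ 2) :
    gaussianPDFReal b v t ≤ gaussianPDFReal a v t := by
  unfold gaussianPDFReal
  gcongr

lemma gaussianPDFReal_le (μ t : ℝ) : gaussianPDFReal μ v t ≤ (√(2 * π * v))⁻¹ := by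
  refine mul_le_of_le_one_right (by positivity) (exp_le_one_iff.2 ?_)
  exact div_nonpos_of_nonpos_of_nonneg (neg_nonpos.2 (sq_nonneg _)) (by positivity)

lemma posPart_gaussianPDFReal_sub_eq_indicator {r : ℝ} (hr : 0 ≤ r) (t : ℝ) :
    max (gaussianPDFReal r v t - gaussianPDFReal 0 v t) 0 =
      (Ici (r / 2)).indicator (fun t ↦ gaussianPDFReal r v t - gaussianPDFReal 0 v t) t := by
  by_cases ht : r / 2 ≤ t
  · rw [indicator_of_mem (mem_Ici.2 ht),
      max_eq_left (sub_nonneg.2 (gaussianPDFReal_le_of_sq_le (by nlinarith)))]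
  · rw [indicator_of_notMem (mt mem_Ici.1 ht),
      max_eq_right (sub_nonpos.2 (gaussianPDFReal_le_of_sq_le (by nlinarith)))]

lemma setIntegral_Ici_gaussianPDFReal (μ a : ℝ) :
    ∫ t in Ici a, gaussianPDFReal μ v t = ∫ t in Ici (a - μ), gaussianPDFReal 0 v t := by
  have := (measurePreserving_sub_right volume μ).setIntegral_preimage_emb
    (measurableEmbedding_subRight μ) (gaussianPDFReal 0 v) (Ici (a - μ))
  simpa [gaussianPDFReal_sub] using this

lemma integral_posPart_gaussianPDFReal_sub_le {r : ℝ} (hr : 0 ≤ r) :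
    ∫ t, max (gaussianPDFReal r v t - gaussianPDFReal 0 v t) 0 ≤ r * (√(2 * π * v))⁻¹ := by
  have hint (μ : ℝ) (s : Set ℝ) : IntegrableOn (gaussianPDFReal μ v) s :=
    (integrable_gaussianPDFReal μ v).integrableOn
  calc ∫ t, max (gaussianPDFReal r v t - gaussianPDFReal 0 v t) 0
      = (∫ t in Ici (r / 2), gaussianPDFReal r v t) -
          ∫ t in Ici (r / 2), gaussianPDFReal 0 v t := by
        simp_rw [posPart_gaussianPDFReal_sub_eq_indicator hr]
        rw [integral_indicator measurableSet_Ici, integral_sub (hint _ _) (hint _ _)]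
    _ = ∫ t in -(r / 2)..r / 2, gaussianPDFReal 0 v t := by
        rw [setIntegral_Ici_gaussianPDFReal r, show r / 2 - r = -(r / 2) by ring,
          intervalIntegral.integral_Ici_sub_Ici' (hint _ _) (hint _ _)]
    _ ≤ (√(2 * π * v))⁻¹ * |r / 2 - -(r / 2)| :=
        (Real.le_norm_self _).trans (intervalIntegral.norm_integral_le_of_norm_le_const fun t _ ↦ by
          rw [norm_of_nonneg (gaussianPDFReal_nonneg _ _ _)]
          exact gaussianPDFReal_le _ _)
    _ = r * (√(2 * π * v))⁻¹ := by
        rw [abs_of_nonneg (by linarith)]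
        ring

end OneDimensional

lemma integral_mul_prod_sdiff_gaussianPDFReal {ι : Type*} [Fintype ι] [DecidableEq ι] {v : ℝ≥0}
    (hv : v ≠ 0) (g : ℝ → ℝ) (i : ι) :
    ∫ y : EuclideanSpace ℝ ι, g (y i) * ∏ j ∈ Finset.univ \ {i}, gaussianPDFReal 0 v (y j) =
      ∫ t, g t := by
  rw [← (PiLp.volume_preserving_toLp ι).integral_comp
    (MeasurableEquiv.toLp 2 _).measurableEmbedding]
  set F : ι → ℝ → ℝ := Function.update (fun _ ↦ gaussianPDFReal 0 v) i g
  have hF (j : ι) : ∫ t, F j t = Function.update (fun _ ↦ (1 : ℝ)) i (∫ t, g t) j := by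
    rcases eq_or_ne j i with rfl | hj
    · simp [F]
    · simp [F, hj, integral_gaussianPDFReal_eq_one 0 hv]
  have hprod (x : ι → ℝ) :
      g (x i) * ∏ j ∈ Finset.univ \ {i}, gaussianPDFReal 0 v (x j) = ∏ j, F j (x j) := by
    rw [← Finset.prod_update_of_mem (Finset.mem_univ i)]
    congr 1 with j
    rcases eq_or_ne j i with rfl | hj <;> simp [F, *]
  simp only [hprod, integral_fintype_prod_volume_eq_prod F]
  simp [hF, Finset.prod_update_of_mem]

section Gaussian

variable {d : ℕ} {σ : ℝ}

lemma gpdfs_linearIsometryEquiv (L : EuclideanSpace ℝ (Fin d) ≃ₗᵢ[ℝ] EuclideanSpace ℝ (Fin d))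
    (w : EuclideanSpace ℝ (Fin d)) : gpdfs d σ (L w) = gpdfs d σ w := by
  simp only [gpdfs, L.norm_map]

lemma gpdfs_eq_prod (y : EuclideanSpace ℝ (Fin d)) :
    gpdfs d σ y = ∏ i, gaussianPDFReal 0 (gaussVar σ) (y i) := by
  have hconst : (2 * π * σ ^ 2) ^ (-(d : ℝ) / 2) = (√(2 * π * σ ^ 2))⁻¹ ^ d := by
    rw [show -(d : ℝ) / 2 = 1 / 2 * -d by ring, rpow_mul (by positivity), ← sqrt_eq_rpow,
      rpow_neg (sqrt_nonneg _), rpow_natCast, inv_pow]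
  have hnorm : ‖y‖ ^ 2 = ∑ i, y i ^ 2 := by simp [EuclideanSpace.norm_sq_eq]
  simp only [gaussianPDFReal, coe_gaussVar, sub_zero, Finset.prod_mul_distrib,
    Finset.prod_const, Finset.card_univ, Fintype.card_fin, ← exp_sum, ← Finset.sum_div,
    Finset.sum_neg_distrib, gpdfs, hconst, hnorm]

lemma integrable_gpdfs : Integrable (gpdfs d σ) := by
  rw [← (PiLp.volume_preserving_toLp (Fin d)).integrable_comp_emb
    (MeasurableEquiv.toLp 2 _).measurableEmbedding]
  simp only [Function.comp_def, gpdfs_eq_prod]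
  exact Integrable.fintype_prod fun _ ↦ integrable_gaussianPDFReal _ _

lemma integral_comp_gpdfs_sub_of_norm_eq (G : ℝ → ℝ → ℝ)
    {δ δ' : EuclideanSpace ℝ (Fin d)} (h : ‖δ'‖ = ‖δ‖) :
    ∫ w, G (gpdfs d σ (w - δ)) (gpdfs d σ w) = ∫ w, G (gpdfs d σ (w - δ')) (gpdfs d σ w) := by
  set R := (ℝ ∙ (δ' - δ))ᗮ.reflection
  have hR : R δ' = δ := Submodule.reflection_sub h
  rw [← R.measurePreserving.integral_comp R.toHomeomorph.measurableEmbedding]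
  simp only [← hR, ← map_sub, gpdfs_linearIsometryEquiv]

lemma integral_posPart_gpdfs_sub (hσ : σ ≠ 0) (δ : EuclideanSpace ℝ (Fin d)) :
    ∫ w, max (gpdfs d σ (w - δ) - gpdfs d σ w) 0 =
      ∫ t, max (gaussianPDFReal ‖δ‖ (gaussVar σ) t - gaussianPDFReal 0 (gaussVar σ) t) 0 := by
  rcases eq_or_ne δ 0 with rfl | hδ
  · simp
  obtain ⟨i⟩ : Nonempty (Fin d) := by
    by_contra! h
    exact hδ (Subsingleton.elim _ _)
  set e := EuclideanSpace.single i ‖δ‖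
  rw [integral_comp_gpdfs_sub_of_norm_eq (fun a b ↦ max (a - b) 0) (δ' := e) (by simp [e]),
    ← integral_mul_prod_sdiff_gaussianPDFReal (gaussVar_ne_zero hσ) _ i]
  congr 1 with y
  have hP : 0 ≤ ∏ j ∈ Finset.univ \ {i}, gaussianPDFReal 0 (gaussVar σ) (y j) :=
    Finset.prod_nonneg fun _ _ ↦ gaussianPDFReal_nonneg _ _ _
  have hshift : ∏ j ∈ Finset.univ \ {i}, gaussianPDFReal 0 (gaussVar σ) ((y - e) j) =
      ∏ j ∈ Finset.univ \ {i}, gaussianPDFReal 0 (gaussVar σ) (y j) :=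
    Finset.prod_congr rfl fun j hj ↦ by simp_all [e]
  rw [gpdfs_eq_prod, gpdfs_eq_prod,
    Finset.prod_eq_mul_prod_sdiff_singleton_of_mem (Finset.mem_univ i),
    Finset.prod_eq_mul_prod_sdiff_singleton_of_mem (Finset.mem_univ i), hshift, ← sub_mul,
    max_mul_of_nonneg _ _ hP, zero_mul]
  simp [e, gaussianPDFReal_sub]

lemma integral_posPart_gpdfs_sub_le (hσ : 0 < σ) (δ : EuclideanSpace ℝ (Fin d)) :
    ∫ w, max (gpdfs d σ (w - δ) - gpdfs d σ w) 0 ≤ ‖δ‖ / (σ * √(2 * π)) := by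
  have hsqrt : √(2 * π * gaussVar σ) = σ * √(2 * π) := by
    rw [coe_gaussVar, mul_comm, sqrt_mul (sq_nonneg σ), sqrt_sq hσ.le]
  rw [integral_posPart_gpdfs_sub hσ.ne', div_eq_mul_inv, ← hsqrt]
  exact integral_posPart_gaussianPDFReal_sub_le (norm_nonneg δ)

end Gaussian

section Smoothing

variable {d : ℕ} {σ C : ℝ} {h : EuclideanSpace ℝ (Fin d) → ℝ}

lemma integrable_comp_add_mul {g : EuclideanSpace ℝ (Fin d) → ℝ} (hg : Integrable g)
    (hmeas : Measurable h) (hbound : ∀ x, |h x| ≤ C) (x : EuclideanSpace ℝ (Fin d)) :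
    Integrable fun w ↦ h (x + w) * g w :=
  hg.bdd_mul (hmeas.comp (measurable_const_add x)).aestronglyMeasurable
    (ae_of_all _ fun _ ↦ hbound _)

lemma gsmooth_add_sub (hmeas : Measurable h) (hbound : ∀ x, |h x| ≤ C)
    (x δ : EuclideanSpace ℝ (Fin d)) :
    gsmooth d σ h (x + δ) - gsmooth d σ h x =
      ∫ w, h (x + w) * (gpdfs d σ (w - δ) - gpdfs d σ w) := by
  have hshift : gsmooth d σ h (x + δ) = ∫ w, h (x + w) * gpdfs d σ (w - δ) := by
    rw [gsmooth, ← integral_sub_right_eq_self _ δ]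
    simp
  rw [hshift, gsmooth, ← integral_sub
    (integrable_comp_add_mul (integrable_gpdfs.comp_sub_right δ) hmeas hbound x)
    (integrable_comp_add_mul integrable_gpdfs hmeas hbound x)]
  simp_rw [mul_sub]

lemma gsmooth_add_sub_le (hmeas : Measurable h) (hrange : ∀ x, h x ∈ Icc 0 1)
    (x δ : EuclideanSpace ℝ (Fin d)) :
    gsmooth d σ h (x + δ) - gsmooth d σ h x ≤ ∫ w, max (gpdfs d σ (w - δ) - gpdfs d σ w) 0 := by
  have hbound (x) : |h x| ≤ 1 := abs_le.2 ⟨by linarith [(hrange x).1], (hrange x).2⟩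
  have hint : Integrable fun w ↦ gpdfs d σ (w - δ) - gpdfs d σ w :=
    (integrable_gpdfs.comp_sub_right δ).sub integrable_gpdfs
  rw [gsmooth_add_sub hmeas hbound]
  refine integral_mono (integrable_comp_add_mul hint hmeas hbound x) hint.pos_part fun w ↦ ?_
  obtain ⟨h0, h1⟩ := hrange (x + w)
  rcases le_total 0 (gpdfs d σ (w - δ) - gpdfs d σ w) with hpos | hneg
  · exact (mul_le_of_le_one_left hpos h1).trans (le_max_left _ _)
  · exact (mul_nonpos_of_nonneg_of_nonpos h0 hneg).trans (le_max_right _ _)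

end Smoothing

/-- `|ĥ(x + δ) − ĥ(x)| ≤ ‖δ‖₂/(σ√(2π))`; in particular `ĥ` is
`(1/(σ√(2π)))`-Lipschitz. -/
theorem stmt_15 (d : ℕ) (σ : ℝ) (hσ : 0 < σ)
    (h : EuclideanSpace ℝ (Fin d) → ℝ) (hmeas : Measurable h)
    (hrange : ∀ x, h x ∈ Set.Icc (0:ℝ) 1) :
    (∀ x δ : EuclideanSpace ℝ (Fin d),
      |gsmooth d σ h (x + δ) - gsmooth d σ h x| ≤ ‖δ‖ / (σ * Real.sqrt (2 * Real.pi))) ∧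
    LipschitzWith (Real.toNNReal (σ * Real.sqrt (2 * Real.pi))⁻¹) (gsmooth d σ h) := by
  have hdiff (x δ) : gsmooth d σ h (x + δ) - gsmooth d σ h x ≤ ‖δ‖ / (σ * √(2 * π)) :=
    (gsmooth_add_sub_le hmeas hrange x δ).trans (integral_posPart_gpdfs_sub_le hσ δ)
  have habs (x δ) : |gsmooth d σ h (x + δ) - gsmooth d σ h x| ≤ ‖δ‖ / (σ * √(2 * π)) := by
    refine abs_sub_le_iff.2 ⟨hdiff x δ, ?_⟩
    simpa using hdiff (x + δ) (-δ)
  refine ⟨habs, LipschitzWith.of_dist_le' fun x y ↦ ?_⟩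
  simpa [dist_eq_norm, div_eq_inv_mul] using habs y (x - y)
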